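/- Let β = (π_ℓ)_{ℓ=1}^L be a chainable architecture of depth L ≥ 2. Then B^β = ⋂_{s=1}^{L−1} B^{β_s}. Equivalently, a matrix A is a product X₁⋯X_L of π_ℓ-factors if and only if its support is contained in that of S_{π₁*⋯*π_L} and, for every s ∈ {1,…,L−1} and every P ∈ P(S_{π₁*⋯*π_s}, S_{π_{s+1}*⋯*π_L}), rank(A[R_P, C_P]) ≤ r(π_s, π_{s+1}). -/

import Mathlib

/-- A *pattern* is a tuple `(a, b, c, d)` of (positive) natural numbers. -/
structure Pattern where
  a : ℕ
  b : ℕ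
  c : ℕ
  d : ℕ

namespace Pattern

/-- The entries of a pattern are positive integers. -/
def Pos (π : Pattern) : Prop := 0 < π.a ∧ 0 < π.b ∧ 0 < π.c ∧ 0 < π.d

/-- Number of rows `a*b*d` of a `π`-factor. -/
def rows (π : Pattern) : ℕ := π.a * π.b * π.d

/-- Number of columns `a*c*d` of a `π`-factor. -/
def cols (π : Pattern) : ℕ := π.a * π.c * π.d

/-- `r(π₁, π₂) = a₁c₁/a₂ (= b₂d₂/d₁)`. -/
def rk (π₁ π₂ : Pattern) : ℕ := π₁.a * π₁.c / π₂.a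

/-- A pair of patterns is *chainable* if `a₁c₁/a₂ = b₂d₂/d₁` is a positive integer,
`a₁ ∣ a₂` and `d₂ ∣ d₁`. -/
def Chainable (π₁ π₂ : Pattern) : Prop :=
  π₂.a ∣ π₁.a * π₁.c ∧ π₁.d ∣ π₂.b * π₂.d ∧
    π₁.a * π₁.c / π₂.a = π₂.b * π₂.d / π₁.d ∧
    0 < π₁.a * π₁.c / π₂.a ∧ π₁.a ∣ π₂.a ∧ π₂.d ∣ π₁.d

/-- `π₁ * π₂ := (a₁, b₁d₁/d₂, a₂c₂/a₁, d₂)`. -/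
instance : Mul Pattern :=
  ⟨fun π₁ π₂ => ⟨π₁.a, π₁.b * π₁.d / π₂.d, π₂.a * π₂.c / π₁.a, π₂.d⟩⟩

/-- `‖π‖₀ := a*b*c*d`. -/
def norm0 (π : Pattern) : ℕ := π.a * π.b * π.c * π.d

end Pattern

open scoped Kronecker

/-- The flattening equivalence `(Fin a × Fin b) × Fin d ≃ Fin (a*b*d)`. -/
def kron3Equiv (a b d : ℕ) : (Fin a × Fin b) × Fin d ≃ Fin (a * b * d) :=
  (finProdFinEquiv.prodCongr (Equiv.refl (Fin d))).trans finProdFinEquiv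

/-- The support matrix `S_π = I_a ⊗ 1_{b×c} ⊗ I_d ∈ {0,1}^{abd × acd}`. -/
def Pattern.S (π : Pattern) : Matrix (Fin π.rows) (Fin π.cols) ℕ :=
  Matrix.reindex (kron3Equiv π.a π.b π.d) (kron3Equiv π.a π.c π.d)
    ((1 : Matrix (Fin π.a) (Fin π.a) ℕ) ⊗ₖ
      (Matrix.of fun _ _ => (1 : ℕ) : Matrix (Fin π.b) (Fin π.c) ℕ) ⊗ₖ
      (1 : Matrix (Fin π.d) (Fin π.d) ℕ))

/-- The support matrix `S_π`, extended by zero to an `ℕ × ℕ`-indexed array. -/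
def SpatN (π : Pattern) : ℕ → ℕ → ℕ := fun i j =>
  if h : i < π.rows ∧ j < π.cols then π.S ⟨i, h.1⟩ ⟨j, h.2⟩ else 0

/-- `X` is (the extension by zero of) a `π`-factor: it vanishes outside the support of `S_π`. -/
def IsFactorN (π : Pattern) (X : ℕ → ℕ → ℂ) : Prop :=
  ∀ i j, SpatN π i j = 0 → X i j = 0

/-- Product of matrices encoded as finitely supported `ℕ × ℕ`-indexed arrays. -/
noncomputable def nmul (f g : ℕ → ℕ → ℂ) : ℕ → ℕ → ℂ := fun i j => ∑' k, f i k * g k j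

/-- `nprod X k = X 0 * X 1 * ⋯ * X k`. -/
noncomputable def nprod (X : ℕ → ℕ → ℕ → ℂ) : ℕ → ℕ → ℕ → ℂ
  | 0 => X 0
  | k + 1 => nmul (nprod X k) (X (k + 1))

/-- Frobenius norm. -/
noncomputable def nfrob (f : ℕ → ℕ → ℂ) : ℝ := Real.sqrt (∑' i, ∑' j, ‖f i j‖ ^ 2)

/-- `A` is (the extension by zero of) a matrix of size `m × n`. -/
def SuppIn (m n : ℕ) (A : ℕ → ℕ → ℂ) : Prop := ∀ i j, A i j ≠ 0 → i < m ∧ j < n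

/-- The set `B^β` of butterfly matrices for the architecture `β = (π 0, …, π (L-1))`. -/
def Bset (π : ℕ → Pattern) (L : ℕ) : Set (ℕ → ℕ → ℂ) :=
  { M | ∃ X : ℕ → ℕ → ℕ → ℂ, (∀ ℓ < L, IsFactorN (π ℓ) (X ℓ)) ∧ M = nprod X (L - 1) }

/-- Partial products of patterns: `pprod π q k = π q * π (q+1) * ⋯ * π (q+k)`. -/
def pprod (π : ℕ → Pattern) (q : ℕ) : ℕ → Pattern
  | 0 => π q
  | k + 1 => pprod π q k * π (q + k + 1)

/-- The two-pattern architecture `(p, q)`. -/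
def pairArch (p q : Pattern) : ℕ → Pattern := fun ℓ => if ℓ = 0 then p else q

/-- Rank-one contribution supports for `ℕ × ℕ`-indexed binary arrays. -/
def contribN (Lf Rf : ℕ → ℕ → ℕ) (k : ℕ) : ℕ → ℕ → ℕ := fun i j => Lf i k * Rf k j

open scoped Classical in
/-- The equivalence classes `P(L,R)` of `k ∼ k' ↔ U_k = U_k'` on `{0, …, r-1}`. -/
noncomputable def classesN (Lf Rf : ℕ → ℕ → ℕ) (r : ℕ) : Finset (Finset ℕ) :=
  (Finset.range r).image fun k =>
    (Finset.range r).filter fun k' => contribN Lf Rf k' = contribN Lf Rf k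

open scoped Classical in
/-- `R_P`: nonzero rows of the common rank-one support of the class `P`. -/
noncomputable def rowSuppN (Lf Rf : ℕ → ℕ → ℕ) (m : ℕ) (P : Finset ℕ) : Finset ℕ :=
  (Finset.range m).filter fun i => ∃ k ∈ P, ∃ j, contribN Lf Rf k i j ≠ 0

open scoped Classical in
/-- `C_P`: nonzero columns of the common rank-one support of the class `P`. -/
noncomputable def colSuppN (Lf Rf : ℕ → ℕ → ℕ) (n : ℕ) (P : Finset ℕ) : Finset ℕ :=
  (Finset.range n).filter fun j => ∃ k ∈ P, ∃ i, contribN Lf Rf k i j ≠ 0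

/-- The rank of the submatrix `A[Rs, Cs]`. -/
noncomputable def rankOn (A : ℕ → ℕ → ℂ) (Rs Cs : Finset ℕ) : ℕ :=
  (Matrix.of fun (i : Rs) (j : Cs) => A i.1 j.1).rank


/-!
The two-factor case carries the argument. For a chainable pair `(ρ, τ)` the rank-one supports
of `S_ρ S_τ` are pairwise equal or disjoint, and the class of a middle index `k` is determined by
`(k / (b_τ d_τ), k % d_ρ)`; it has `r(ρ, τ)` elements. For such non-overlapping supports,
`A = X Y` with `X`, `Y` supported by `S_ρ`, `S_τ` iff `A` is supported by `S_{ρ * τ}` and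
every block `A[R_P, C_P]` has rank at most `|P|`: factor each block separately. Moreover the left
factor can be taken of the form `S_ρ ⊙ (A Z)` (`mask (SpatN ρ) (nmul A Z)`), by choosing the left
factor of each block inside the column space of that block.

For `L` factors we induct on `L`, splitting off the last factor in this way. Each block of the
left factor for a split `(σ, τ')` is a product of a block of `A` for the split `(σ, τ' * τ)` with
`Z`, so the left factor inherits all rank conditions of the shorter architecture.
-/

/-! ### Products and ranks of `ℕ`-indexed matrices -/

section MatrixProduct

variable {f g h : ℕ → ℕ → ℂ}

theorem nmul_eq_sum {K : Finset ℕ} {i j : ℕ} (hK : ∀ k ∉ K, f i k * g k j = 0) :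
    nmul f g i j = ∑ k ∈ K, f i k * g k j :=
  tsum_eq_sum hK

theorem nmul_eq_zero {i j : ℕ} (h : ∀ k, f i k * g k j = 0) : nmul f g i j = 0 := by
  simp [nmul, h]

theorem exists_mul_ne_zero_of_nmul_ne_zero {i j : ℕ} (h : nmul f g i j ≠ 0) :
    ∃ k, f i k ≠ 0 ∧ g k j ≠ 0 := by
  by_contra! H
  exact h (nmul_eq_zero fun k => by
    by_cases hf : f i k = 0
    · simp [hf]
    · simp [H k hf])

theorem SuppIn.nmul {m n q : ℕ} (hf : SuppIn m n f) (hg : SuppIn n q g) :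
    SuppIn m q (nmul f g) := fun i j hij =>
  have ⟨k, hfk, hgk⟩ := exists_mul_ne_zero_of_nmul_ne_zero hij
  ⟨(hf i k hfk).1, (hg k j hgk).2⟩

theorem nmul_eq_sum_range {N : ℕ} (hf : SuppIn N N f) (i j : ℕ) :
    nmul f g i j = ∑ k ∈ Finset.range N, f i k * g k j :=
  nmul_eq_sum fun k hk => by
    by_cases hfk : f i k = 0
    · simp [hfk]
    · exact absurd (hf i k hfk).2 (by simpa using hk)

theorem nmul_assoc {N : ℕ} (hf : SuppIn N N f) (hg : SuppIn N N g) :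
    nmul (nmul f g) h = nmul f (nmul g h) := by
  funext i j
  simp only [nmul_eq_sum_range (hf.nmul hg), nmul_eq_sum_range hf, nmul_eq_sum_range hg,
    Finset.sum_mul, Finset.mul_sum, mul_assoc]
  exact Finset.sum_comm

end MatrixProduct

theorem Matrix.exists_eq_mul_mul_of_rank_le {K m n κ : Type*} [Field K] [Fintype m] [Fintype n]
    [Fintype κ] [DecidableEq n] [DecidableEq κ] (M : Matrix m n K)
    (h : M.rank ≤ Fintype.card κ) : ∃ (W : Matrix n κ K) (G : Matrix κ n K), M = M * W * G := by
  set T := M.mulVecLin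
  have hdim : Module.finrank K (LinearMap.range T) ≤ Module.finrank K (κ → K) := by
    rw [Module.finrank_fintype_fun_eq_card]
    exact h
  obtain ⟨ι, hι⟩ := finrank_le_iff_exists_linearMap.mp hdim
  obtain ⟨e, he⟩ := ι.exists_leftInverse_of_injective (LinearMap.ker_eq_bot.mpr hι)
  obtain ⟨s, hs⟩ :=
    T.rangeRestrict.exists_rightInverse_of_surjective (LinearMap.range_rangeRestrict T)
  refine ⟨LinearMap.toMatrix' (s ∘ₗ e), LinearMap.toMatrix' (ι ∘ₗ T.rangeRestrict), ?_⟩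
  apply Matrix.toLin'.injective
  rw [Matrix.toLin'_mul, Matrix.toLin'_mul, Matrix.toLin'_toMatrix', Matrix.toLin'_toMatrix']
  refine LinearMap.ext fun v => ?_
  have hs' := congrArg Subtype.val (LinearMap.congr_fun hs (T.rangeRestrict v))
  have he' := LinearMap.congr_fun he (T.rangeRestrict v)
  simp only [LinearMap.comp_apply, LinearMap.id_apply] at hs' he' ⊢
  rw [he']
  exact hs'.symm

section RankOn

variable {A B Z : ℕ → ℕ → ℂ} {R R' C C' K : Finset ℕ}

theorem rankOn_le_of_eq_sum (h : ∀ i ∈ R, ∀ k ∈ C', B i k = ∑ j ∈ C, A i j * Z j k) :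
    rankOn B R C' ≤ rankOn A R C := by
  have hmul : (Matrix.of fun (i : R) (k : C') => B i k) =
      (Matrix.of fun (i : R) (j : C) => A i j) * Matrix.of fun (j : C) (k : C') => Z j k := by
    ext i k
    rw [Matrix.of_apply, h i i.2 k k.2, Matrix.mul_apply, ← Finset.sum_coe_sort C]
    rfl
  unfold rankOn
  rw [hmul]
  exact Matrix.rank_mul_le_left _ _

theorem rankOn_mono_left (h : R' ⊆ R) : rankOn A R' C ≤ rankOn A R C :=
  Matrix.rank_submatrix_le (Matrix.of fun (i : R) (j : C) => A i j) (fun i : R' => ⟨i.1, h i.2⟩) id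

theorem rankOn_le_card : rankOn A R K ≤ K.card :=
  (Matrix.rank_le_card_width _).trans_eq (Fintype.card_coe K)

theorem exists_eq_sum_of_rankOn_le (h : rankOn A R C ≤ K.card) :
    ∃ W G : ℕ → ℕ → ℂ, ∀ i ∈ R, ∀ j ∈ C,
      A i j = ∑ k ∈ K, (∑ j' ∈ C, A i j' * W j' k) * G k j := by
  obtain ⟨W, G, hWG⟩ := Matrix.exists_eq_mul_mul_of_rank_le
    (Matrix.of fun (i : R) (j : C) => A i j) (κ := K) (h.trans_eq (Fintype.card_coe K).symm)
  classical
  refine ⟨fun j k => if h : j ∈ C ∧ k ∈ K then W ⟨j, h.1⟩ ⟨k, h.2⟩ else 0,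
    fun k j => if h : k ∈ K ∧ j ∈ C then G ⟨k, h.1⟩ ⟨j, h.2⟩ else 0, fun i hi j hj => ?_⟩
  have := congrFun (congrFun hWG ⟨i, hi⟩) ⟨j, hj⟩
  simp only [Matrix.mul_apply, Matrix.of_apply] at this
  rw [this, ← Finset.sum_coe_sort K]
  refine Finset.sum_congr rfl fun k _ => ?_
  rw [← Finset.sum_coe_sort C]
  simp [k.2, hj]

end RankOn

/-! ### Non-overlapping supports -/

def Supported (S : ℕ → ℕ → ℕ) (X : ℕ → ℕ → ℂ) : Prop := ∀ i j, S i j = 0 → X i j = 0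

def mask (S : ℕ → ℕ → ℕ) (X : ℕ → ℕ → ℂ) : ℕ → ℕ → ℂ := fun i j => if S i j = 0 then 0 else X i j

theorem mask_supported (S : ℕ → ℕ → ℕ) (X : ℕ → ℕ → ℂ) : Supported S (mask S X) :=
  fun _ _ h => if_pos h

open scoped Classical in
noncomputable def contribClass (Lf Rf : ℕ → ℕ → ℕ) (r k : ℕ) : Finset ℕ :=
  (Finset.range r).filter fun k' => contribN Lf Rf k' = contribN Lf Rf k

section Contributions

variable {Lf Rf : ℕ → ℕ → ℕ} {m r n i j k k' : ℕ}

theorem contribN_ne_zero_iff : contribN Lf Rf k i j ≠ 0 ↔ Lf i k ≠ 0 ∧ Rf k j ≠ 0 :=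
  mul_ne_zero_iff

theorem mem_contribClass :
    k' ∈ contribClass Lf Rf r k ↔ k' < r ∧ contribN Lf Rf k' = contribN Lf Rf k := by
  simp [contribClass]

theorem contribClass_eq (h : contribN Lf Rf k' = contribN Lf Rf k) :
    contribClass Lf Rf r k' = contribClass Lf Rf r k := by
  unfold contribClass
  rw [h]

theorem mem_classesN {P : Finset ℕ} :
    P ∈ classesN Lf Rf r ↔ ∃ k < r, contribClass Lf Rf r k = P := by
  simp [classesN, contribClass]

theorem mem_rowSuppN_contribClass (hk : k < r) :
    i ∈ rowSuppN Lf Rf m (contribClass Lf Rf r k) ↔ i < m ∧ ∃ j, contribN Lf Rf k i j ≠ 0 := by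
  simp only [rowSuppN, Finset.mem_filter, Finset.mem_range, mem_contribClass]
  refine and_congr_right fun _ => ⟨?_, fun h => ⟨k, ⟨hk, rfl⟩, h⟩⟩
  rintro ⟨k', ⟨-, hk'⟩, h⟩
  rwa [hk'] at h

theorem exists_of_mem_colSuppN_contribClass (h : j ∈ colSuppN Lf Rf n (contribClass Lf Rf r k)) :
    ∃ i, contribN Lf Rf k i j ≠ 0 := by
  simp only [colSuppN, Finset.mem_filter, mem_contribClass] at h
  obtain ⟨-, k', ⟨-, hk'⟩, h⟩ := h
  rwa [hk'] at h

theorem mem_colSuppN_contribClass (hk : k < r) :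
    j ∈ colSuppN Lf Rf n (contribClass Lf Rf r k) ↔ j < n ∧ ∃ i, contribN Lf Rf k i j ≠ 0 := by
  refine ⟨fun h => ⟨?_, exists_of_mem_colSuppN_contribClass h⟩, fun ⟨hj, h⟩ => ?_⟩ <;>
    simp only [colSuppN, Finset.mem_filter, Finset.mem_range] at h ⊢
  · exact h.1
  · exact ⟨hj, k, mem_contribClass.mpr ⟨hk, rfl⟩, h⟩

theorem nmul_eq_zero_of_contribN_eq_zero {f g : ℕ → ℕ → ℂ} (hf : Supported Lf f)
    (hg : Supported Rf g) (h : ∀ k, contribN Lf Rf k i j = 0) : nmul f g i j = 0 :=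
  nmul_eq_zero fun k => by
    by_cases hL : Lf i k = 0
    · simp [hf i k hL]
    · have hR : Rf k j = 0 := by simpa [contribN, hL] using h k
      simp [hg k j hR]

end Contributions

structure NonOverlapping (Lf Rf : ℕ → ℕ → ℕ) (m r n : ℕ) : Prop where
  lt_of_contribN_ne_zero : ∀ {k i j}, contribN Lf Rf k i j ≠ 0 → i < m ∧ k < r ∧ j < n
  contribN_eq : ∀ {k k' i j}, contribN Lf Rf k i j ≠ 0 → contribN Lf Rf k' i j ≠ 0 →
    contribN Lf Rf k = contribN Lf Rf k'

namespace NonOverlapping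

variable {Lf Rf : ℕ → ℕ → ℕ} {m r n i j k : ℕ} {f g A : ℕ → ℕ → ℂ}

theorem contribN_ne_zero_iff_mem (hS : NonOverlapping Lf Rf m r n) (hk : k < r) :
    contribN Lf Rf k i j ≠ 0 ↔
      i ∈ rowSuppN Lf Rf m (contribClass Lf Rf r k) ∧
        j ∈ colSuppN Lf Rf n (contribClass Lf Rf r k) := by
  rw [mem_rowSuppN_contribClass hk, mem_colSuppN_contribClass hk]
  refine ⟨fun h => ⟨⟨(hS.lt_of_contribN_ne_zero h).1, j, h⟩,
    ⟨(hS.lt_of_contribN_ne_zero h).2.2, i, h⟩⟩, ?_⟩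
  rintro ⟨⟨-, j', hj'⟩, ⟨-, i', hi'⟩⟩
  exact contribN_ne_zero_iff.mpr ⟨(contribN_ne_zero_iff.mp hj').1, (contribN_ne_zero_iff.mp hi').2⟩

theorem nmul_eq_sum_contribClass (hS : NonOverlapping Lf Rf m r n) (hf : Supported Lf f)
    (hg : Supported Rf g) (h : contribN Lf Rf k i j ≠ 0) :
    nmul f g i j = ∑ k' ∈ contribClass Lf Rf r k, f i k' * g k' j :=
  nmul_eq_sum fun k' hk' => by
    by_contra hne
    obtain ⟨hf', hg'⟩ := mul_ne_zero_iff.mp hne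
    have h' : contribN Lf Rf k' i j ≠ 0 :=
      contribN_ne_zero_iff.mpr ⟨fun h0 => hf' (hf i k' h0), fun h0 => hg' (hg k' j h0)⟩
    exact hk' (mem_contribClass.mpr
      ⟨(hS.lt_of_contribN_ne_zero h').2.1, hS.contribN_eq h' h⟩)

theorem rankOn_nmul_le (hS : NonOverlapping Lf Rf m r n) (hf : Supported Lf f)
    (hg : Supported Rf g) (hk : k < r) :
    rankOn (nmul f g) (rowSuppN Lf Rf m (contribClass Lf Rf r k))
      (colSuppN Lf Rf n (contribClass Lf Rf r k)) ≤ (contribClass Lf Rf r k).card :=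
  calc _ ≤ rankOn f (rowSuppN Lf Rf m (contribClass Lf Rf r k)) (contribClass Lf Rf r k) :=
        rankOn_le_of_eq_sum fun _ hi _ hj => by
          apply hS.nmul_eq_sum_contribClass hf hg
          exact (hS.contribN_ne_zero_iff_mem hk).mpr ⟨hi, hj⟩
    _ ≤ _ := rankOn_le_card

theorem exists_nmul_mask_eq (hS : NonOverlapping Lf Rf m r n)
    (hA : ∀ i j, (∀ k, contribN Lf Rf k i j = 0) → A i j = 0)
    (hrank : ∀ P ∈ classesN Lf Rf r,
      rankOn A (rowSuppN Lf Rf m P) (colSuppN Lf Rf n P) ≤ P.card) :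
    ∃ Z g, (∀ j k, Z j k ≠ 0 → Rf k j ≠ 0) ∧ Supported Rf g ∧
      A = nmul (mask Lf (nmul A Z)) g := by
  classical
  -- Indexed by the class, so that all indices of a class use the same factorization of its block.
  choose! W G hWG using fun P hP => exists_eq_sum_of_rankOn_le (hrank P hP)
  set cls := contribClass Lf Rf r with hcls_def
  set Z : ℕ → ℕ → ℂ := fun j k => if j ∈ colSuppN Lf Rf n (cls k) then W (cls k) j k else 0
  set g : ℕ → ℕ → ℂ := fun k j => if Rf k j = 0 then 0 else G (cls k) k j
  have hg : Supported Rf g := fun k j h => if_pos h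
  refine ⟨Z, g, fun j k hZ => ?_, hg, funext fun i => funext fun j => ?_⟩
  · have hj : j ∈ colSuppN Lf Rf n (cls k) := by
      by_contra hj
      exact hZ (if_neg hj)
    obtain ⟨i, hi⟩ := exists_of_mem_colSuppN_contribClass hj
    exact (contribN_ne_zero_iff.mp hi).2
  by_cases hij : ∃ k, contribN Lf Rf k i j ≠ 0
  swap
  · push Not at hij
    rw [hA i j hij, nmul_eq_zero_of_contribN_eq_zero (mask_supported _ _) hg hij]
  obtain ⟨k, hk⟩ := hij
  have hkr := (hS.lt_of_contribN_ne_zero hk).2.1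
  obtain ⟨hi, hj⟩ := (hS.contribN_ne_zero_iff_mem hkr).mp hk
  rw [hS.nmul_eq_sum_contribClass (mask_supported _ _) hg hk,
    hWG _ (mem_classesN.mpr ⟨k, hkr, rfl⟩) i hi j hj, ← hcls_def]
  refine Finset.sum_congr rfl fun k' hk' => ?_
  have hU := (mem_contribClass.mp hk').2
  have hcls : cls k' = cls k := contribClass_eq hU
  obtain ⟨hL, hR⟩ := contribN_ne_zero_iff.mp (hU ▸ hk : contribN Lf Rf k' i j ≠ 0)
  have hZ : ∀ j', Z j' k' = if j' ∈ colSuppN Lf Rf n (cls k) then W (cls k) j' k' else 0 := by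
    intro j'
    simp only [Z, hcls]
  simp only [mask, hL, hR, g, hcls, if_false]
  congr 1
  rw [nmul_eq_sum (K := colSuppN Lf Rf n (cls k)) fun j' hj' => by simp [hZ, hj']]
  exact Finset.sum_congr rfl fun j' hj' => by simp [hZ, hj']

theorem exists_nmul_eq_iff (hS : NonOverlapping Lf Rf m r n) (A : ℕ → ℕ → ℂ) :
    (∃ f g, Supported Lf f ∧ Supported Rf g ∧ A = nmul f g) ↔
      (∀ i j, (∀ k, contribN Lf Rf k i j = 0) → A i j = 0) ∧
        ∀ P ∈ classesN Lf Rf r, rankOn A (rowSuppN Lf Rf m P) (colSuppN Lf Rf n P) ≤ P.card := by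
  constructor
  · rintro ⟨f, g, hf, hg, rfl⟩
    refine ⟨fun i j h => nmul_eq_zero_of_contribN_eq_zero hf hg h, fun P hP => ?_⟩
    obtain ⟨k, hk, rfl⟩ := mem_classesN.mp hP
    exact hS.rankOn_nmul_le hf hg hk
  · rintro ⟨hA, hrank⟩
    obtain ⟨Z, g, -, hg, hAeq⟩ := hS.exists_nmul_mask_eq hA hrank
    exact ⟨_, g, mask_supported _ _, hg, hAeq⟩

end NonOverlapping

/-! ### Chainable patterns and their support matrices -/

namespace Pattern

variable {ρ σ τ : Pattern}

theorem rows_eq (π : Pattern) : π.rows = π.a * (π.b * π.d) := Nat.mul_assoc _ _ _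

theorem Chainable.dvd_a (hc : ρ.Chainable τ) : ρ.a ∣ τ.a := hc.2.2.2.2.1

theorem Chainable.dvd_d (hc : ρ.Chainable τ) : τ.d ∣ ρ.d := hc.2.2.2.2.2

theorem Chainable.a_mul_c (hc : ρ.Chainable τ) : ρ.a * ρ.c = τ.a * ρ.rk τ :=
  (Nat.mul_div_cancel' hc.1).symm

theorem Chainable.b_mul_d (hc : ρ.Chainable τ) : τ.b * τ.d = ρ.d * ρ.rk τ := by
  rw [rk, hc.2.2.1, Nat.mul_div_cancel' hc.2.1]

theorem Chainable.rk_pos (hc : ρ.Chainable τ) : 0 < ρ.rk τ := hc.2.2.2.1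

theorem Chainable.a_pos (hc : ρ.Chainable τ) : 0 < ρ.a :=
  Nat.pos_of_ne_zero fun h => by simpa [rk, h] using hc.rk_pos

theorem Chainable.d_pos (hc : ρ.Chainable τ) : 0 < ρ.d :=
  Nat.pos_of_ne_zero fun h => by simpa [rk, hc.2.2.1, h] using hc.rk_pos

theorem Chainable.d_dvd_b_mul_d (hc : ρ.Chainable τ) : ρ.d ∣ τ.b * τ.d := hc.2.1

theorem Chainable.b_mul_d_pos (hc : ρ.Chainable τ) : 0 < τ.b * τ.d := by
  rw [hc.b_mul_d]; exact Nat.mul_pos hc.d_pos hc.rk_pos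

theorem Chainable.cols_eq_rows (hc : ρ.Chainable τ) : ρ.cols = τ.rows := by
  rw [cols, rows, Nat.mul_assoc τ.a, hc.b_mul_d, hc.a_mul_c]; ring

theorem Chainable.c_mul_d (hc : ρ.Chainable τ) : ρ.c * ρ.d = τ.b * τ.d * (τ.a / ρ.a) := by
  apply Nat.eq_of_mul_eq_mul_left hc.a_pos
  rw [hc.b_mul_d, ← Nat.mul_assoc, hc.a_mul_c,
    show ρ.a * (ρ.d * ρ.rk τ * (τ.a / ρ.a)) = ρ.d * ρ.rk τ * (ρ.a * (τ.a / ρ.a)) by ring,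
    Nat.mul_div_cancel' hc.dvd_a]
  ring

theorem Chainable.mul_b_mul_d (hc : ρ.Chainable τ) : (ρ * τ).b * (ρ * τ).d = ρ.b * ρ.d :=
  Nat.div_mul_cancel (hc.dvd_d.trans (dvd_mul_left _ _))

theorem Chainable.mul_a_mul_c (hc : ρ.Chainable τ) : (ρ * τ).a * (ρ * τ).c = τ.a * τ.c :=
  Nat.mul_div_cancel' (hc.dvd_a.trans (dvd_mul_right _ _))

theorem Chainable.mul_c_mul_d (hc : ρ.Chainable τ) :
    (ρ * τ).c * (ρ * τ).d = τ.c * τ.d * (τ.a / ρ.a) := by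
  show τ.a * τ.c / ρ.a * τ.d = _
  rw [Nat.mul_comm τ.a, Nat.mul_div_assoc _ hc.dvd_a]; ring

theorem Chainable.mul_rows (hc : ρ.Chainable τ) : (ρ * τ).rows = ρ.rows := by
  simp only [rows, Nat.mul_assoc, hc.mul_b_mul_d]; rfl

theorem Chainable.mul_cols (hc : ρ.Chainable τ) : (ρ * τ).cols = τ.cols := by
  simp only [cols, hc.mul_a_mul_c]; rfl

theorem Pos.mul (hρ : ρ.Pos) (hτ : τ.Pos) (hc : ρ.Chainable τ) : (ρ * τ).Pos := by
  have hbd := hc.dvd_d.trans (dvd_mul_left ρ.d ρ.b)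
  have hac := hc.dvd_a.trans (dvd_mul_right τ.a τ.c)
  exact ⟨hρ.1, Nat.div_pos (Nat.le_of_dvd (Nat.mul_pos hρ.2.1 hρ.2.2.2) hbd) hτ.2.2.2,
    Nat.div_pos (Nat.le_of_dvd (Nat.mul_pos hτ.1 hτ.2.2.1) hac) hρ.1, hτ.2.2.2⟩

theorem Chainable.mul_left (h₁ : ρ.Chainable σ) (h₂ : σ.Chainable τ) : (ρ * σ).Chainable τ := by
  obtain ⟨hac, hbd, heq, hpos, ha, hd⟩ := h₂
  have e := h₁.mul_a_mul_c
  exact ⟨e ▸ hac, hbd, e ▸ heq, e ▸ hpos, h₁.dvd_a.trans ha, hd⟩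

theorem Chainable.mul_right (h₁ : ρ.Chainable σ) (h₂ : σ.Chainable τ) : ρ.Chainable (σ * τ) := by
  obtain ⟨hac, hbd, heq, hpos, ha, hd⟩ := h₁
  have e := h₂.mul_b_mul_d
  exact ⟨hac, e ▸ hbd, e ▸ heq, hpos, ha, h₂.dvd_d.trans hd⟩

theorem mul_assoc_of_chainable (h₁ : ρ.Chainable σ) (h₂ : σ.Chainable τ) :
    ρ * σ * τ = ρ * (σ * τ) := by
  show Pattern.mk _ _ _ _ = Pattern.mk _ _ _ _
  congr 1
  · exact congrArg (· / τ.d) h₁.mul_b_mul_d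
  · exact congrArg (· / ρ.a) h₂.mul_a_mul_c.symm

theorem rk_mul_left (h₁ : ρ.Chainable σ) : (ρ * σ).rk τ = σ.rk τ := by
  simp only [rk, h₁.mul_a_mul_c]

end Pattern

theorem add_mul_div_eq_and_mod_eq {δ d α N : ℕ} (hδ : δ < d) (hdN : d ∣ N) (hN : 0 < N) :
    (δ + α * N) / N = α ∧ (δ + α * N) % d = δ := by
  obtain ⟨e, rfl⟩ := hdN
  refine ⟨?_, ?_⟩
  · rw [Nat.add_mul_div_right _ _ hN, Nat.div_eq_of_lt (hδ.trans_le (Nat.le_of_dvd hN ⟨e, rfl⟩)),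
      Nat.zero_add]
  · rw [show α * (d * e) = d * (α * e) by ring, Nat.add_mul_mod_self_left, Nat.mod_eq_of_lt hδ]

theorem card_filter_div_mod {a N d α δ : ℕ} (hdN : d ∣ N) (hα : α < a) (hδ : δ < d) :
    ((Finset.range (a * N)).filter fun k => k / N = α ∧ k % d = δ).card = N / d := by
  obtain ⟨e, rfl⟩ := hdN
  have hd : 0 < d := by omega
  rw [Nat.mul_div_cancel_left e hd]
  refine (Finset.card_nbij' (fun k => k % (d * e) / d) (fun t => δ + d * t + α * (d * e))
    ?_ ?_ ?_ ?_).trans (Finset.card_range e)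
  · intro k hk
    simp only [Finset.mem_coe, Finset.mem_filter, Finset.mem_range] at hk ⊢
    rw [Nat.div_lt_iff_lt_mul hd, Nat.mul_comm e]
    exact Nat.mod_lt _ (Nat.pos_of_ne_zero fun h => by simp [h] at hk)
  · intro t ht
    simp only [Finset.mem_coe, Finset.mem_filter, Finset.mem_range] at ht ⊢
    have hsmall : δ + d * t < d * e := by nlinarith
    have hdiv : (δ + d * t + α * (d * e)) / (d * e) = α := by
      rw [Nat.add_mul_div_right _ _ (by omega), Nat.div_eq_of_lt hsmall, Nat.zero_add]
    refine ⟨?_, hdiv, ?_⟩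
    · rw [← Nat.div_lt_iff_lt_mul (by omega), hdiv]; exact hα
    · rw [Nat.add_assoc, Nat.mul_comm α, Nat.mul_assoc, ← Nat.mul_add, Nat.add_mul_mod_self_left,
        Nat.mod_eq_of_lt hδ]
  · intro k hk
    simp only [Finset.mem_coe, Finset.mem_filter, Finset.mem_range] at hk
    obtain ⟨-, hkα, hkδ⟩ := hk
    have h1 := Nat.mod_add_div (k % (d * e)) d
    have h2 := Nat.mod_add_div k (d * e)
    rw [Nat.mod_mod_of_dvd k (dvd_mul_right d e), hkδ] at h1
    rw [hkα] at h2
    show δ + d * (k % (d * e) / d) + α * (d * e) = k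
    linarith
  · intro t ht
    simp only [Finset.mem_coe, Finset.mem_range] at ht
    have hsmall : δ + d * t < d * e := by nlinarith
    simp only [Nat.add_mul_mod_self_right, Nat.mod_eq_of_lt hsmall, Nat.add_mul_div_left _ _ hd,
      Nat.div_eq_of_lt hδ, Nat.zero_add]

theorem spatN_eq_ite (π : Pattern) (i j : ℕ) :
    SpatN π i j = if i < π.rows ∧ j < π.cols ∧ i / (π.b * π.d) = j / (π.c * π.d)
      ∧ i % π.d = j % π.d then 1 else 0 := by
  unfold SpatN
  by_cases h : i < π.rows ∧ j < π.cols
  · rw [dif_pos h]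
    show Matrix.reindex (kron3Equiv π.a π.b π.d) (kron3Equiv π.a π.c π.d) _
      (⟨i, h.1⟩ : Fin (π.a * π.b * π.d)) (⟨j, h.2⟩ : Fin (π.a * π.c * π.d)) = _
    simp only [kron3Equiv, finProdFinEquiv, Matrix.reindex_apply, Equiv.symm_trans_apply,
      Equiv.prodCongr_symm, Equiv.refl_symm, Equiv.prodCongr_apply, Equiv.coe_fn_symm_mk,
      Equiv.coe_refl, Matrix.submatrix_apply, Prod.map_apply, id_eq, Matrix.kroneckerMap_apply,
      Matrix.one_apply, Matrix.of_apply, Fin.ext_iff, Fin.coe_divNat, Fin.coe_modNat, mul_one,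
      mul_ite, mul_zero, Nat.div_div_eq_div_mul, Nat.mul_comm π.d, h, true_and, ← ite_and, and_comm]
  · rw [dif_neg h, if_neg fun h' => h ⟨h'.1, h'.2.1⟩]

theorem spatN_ne_zero_iff {π : Pattern} {i j : ℕ} :
    SpatN π i j ≠ 0 ↔ i < π.rows ∧ j < π.cols ∧ i / (π.b * π.d) = j / (π.c * π.d)
      ∧ i % π.d = j % π.d := by
  rw [spatN_eq_ite]; split <;> simp_all

theorem spatN_eq_of_ne_zero_iff {π π' : Pattern} {i j i' j' : ℕ}
    (h : SpatN π i j ≠ 0 ↔ SpatN π' i' j' ≠ 0) : SpatN π i j = SpatN π' i' j' := by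
  rw [spatN_ne_zero_iff, spatN_ne_zero_iff] at h
  simp only [spatN_eq_ite, h]

theorem exists_spatN_ne_zero_right {π : Pattern} (hπ : π.Pos) {k : ℕ} (hk : k < π.rows) :
    ∃ j, SpatN π k j ≠ 0 := by
  have hcd : 0 < π.c * π.d := Nat.mul_pos hπ.2.2.1 hπ.2.2.2
  obtain ⟨hdiv, hmod⟩ := add_mul_div_eq_and_mod_eq (α := k / (π.b * π.d))
    (Nat.mod_lt k hπ.2.2.2) (dvd_mul_left π.d π.c) hcd
  refine ⟨_, spatN_ne_zero_iff.mpr ⟨hk, ?_, hdiv.symm, hmod.symm⟩⟩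
  rw [Pattern.cols, Nat.mul_assoc, ← Nat.div_lt_iff_lt_mul hcd, hdiv, Nat.div_lt_iff_lt_mul
    (Nat.mul_pos hπ.2.1 hπ.2.2.2), ← Nat.mul_assoc]
  exact hk

theorem exists_spatN_ne_zero_left {π : Pattern} (hπ : π.Pos) {k : ℕ} (hk : k < π.cols) :
    ∃ i, SpatN π i k ≠ 0 := by
  have hbd : 0 < π.b * π.d := Nat.mul_pos hπ.2.1 hπ.2.2.2
  obtain ⟨hdiv, hmod⟩ := add_mul_div_eq_and_mod_eq (α := k / (π.c * π.d))
    (Nat.mod_lt k hπ.2.2.2) (dvd_mul_left π.d π.b) hbd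
  refine ⟨_, spatN_ne_zero_iff.mpr ⟨?_, hk, hdiv, hmod⟩⟩
  rw [Pattern.rows, Nat.mul_assoc, ← Nat.div_lt_iff_lt_mul hbd, hdiv, Nat.div_lt_iff_lt_mul
    (Nat.mul_pos hπ.2.2.1 hπ.2.2.2), ← Nat.mul_assoc]
  exact hk

namespace Pattern.Chainable

variable {ρ τ : Pattern} {i j k k' : ℕ}

theorem spatN_left_ne_zero_iff (hc : ρ.Chainable τ) (hk : k < τ.rows) :
    SpatN ρ i k ≠ 0 ↔
      i < ρ.rows ∧ i / (ρ.b * ρ.d) = k / (τ.b * τ.d) / (τ.a / ρ.a) ∧ i % ρ.d = k % ρ.d := by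
  rw [spatN_ne_zero_iff, hc.cols_eq_rows, hc.c_mul_d, ← Nat.div_div_eq_div_mul k]
  simp only [hk, true_and]

theorem spatN_right_ne_zero_iff (hc : ρ.Chainable τ) :
    SpatN τ k j ≠ 0 ↔
      k < τ.rows ∧ j < τ.cols ∧ j / (τ.c * τ.d) = k / (τ.b * τ.d) ∧ j % τ.d = k % ρ.d % τ.d := by
  rw [spatN_ne_zero_iff, Nat.mod_mod_of_dvd _ hc.dvd_d]
  constructor <;> rintro ⟨h1, h2, h3, h4⟩ <;> exact ⟨h1, h2, h3.symm, h4.symm⟩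

theorem contribN_congr (hc : ρ.Chainable τ) (hk : k < τ.rows) (hk' : k' < τ.rows)
    (hα : k / (τ.b * τ.d) = k' / (τ.b * τ.d)) (hδ : k % ρ.d = k' % ρ.d) :
    contribN (SpatN ρ) (SpatN τ) k = contribN (SpatN ρ) (SpatN τ) k' := by
  funext i j
  unfold contribN
  congr 1 <;> apply spatN_eq_of_ne_zero_iff
  · rw [hc.spatN_left_ne_zero_iff hk, hc.spatN_left_ne_zero_iff hk', hα, hδ]
  · rw [hc.spatN_right_ne_zero_iff, hc.spatN_right_ne_zero_iff, hα, hδ]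
    simp only [hk, hk', true_and]

theorem params_of_contribN_ne_zero (hc : ρ.Chainable τ)
    (h : contribN (SpatN ρ) (SpatN τ) k i j ≠ 0) :
    k < τ.rows ∧ k % ρ.d = i % ρ.d ∧ k / (τ.b * τ.d) = j / (τ.c * τ.d) := by
  obtain ⟨hL, hR⟩ := contribN_ne_zero_iff.mp h
  obtain ⟨hk, -, hα, -⟩ := hc.spatN_right_ne_zero_iff.mp hR
  exact ⟨hk, ((hc.spatN_left_ne_zero_iff hk).mp hL).2.2.symm, hα.symm⟩

theorem nonOverlapping (hc : ρ.Chainable τ) :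
    NonOverlapping (SpatN ρ) (SpatN τ) ρ.rows ρ.cols τ.cols where
  lt_of_contribN_ne_zero h := by
    obtain ⟨hL, hR⟩ := contribN_ne_zero_iff.mp h
    obtain ⟨hi, hk, -⟩ := spatN_ne_zero_iff.mp hL
    exact ⟨hi, hk, (spatN_ne_zero_iff.mp hR).2.1⟩
  contribN_eq h h' := by
    obtain ⟨hk, hδ, hα⟩ := hc.params_of_contribN_ne_zero h
    obtain ⟨hk', hδ', hα'⟩ := hc.params_of_contribN_ne_zero h'
    exact hc.contribN_congr hk hk' (hα.trans hα'.symm) (hδ.trans hδ'.symm)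

theorem card_contribClass (hρ : ρ.Pos) (hτ : τ.Pos) (hc : ρ.Chainable τ) (hk : k < ρ.cols) :
    (contribClass (SpatN ρ) (SpatN τ) ρ.cols k).card = ρ.rk τ := by
  have hkτ : k < τ.rows := hc.cols_eq_rows ▸ hk
  obtain ⟨i, hi⟩ := exists_spatN_ne_zero_left hρ hk
  obtain ⟨j, hj⟩ := exists_spatN_ne_zero_right hτ hkτ
  have hU : contribN (SpatN ρ) (SpatN τ) k i j ≠ 0 := contribN_ne_zero_iff.mpr ⟨hi, hj⟩
  obtain ⟨-, hδ, hα⟩ := hc.params_of_contribN_ne_zero hU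
  have hcls : contribClass (SpatN ρ) (SpatN τ) ρ.cols k = (Finset.range τ.rows).filter
      fun k' => k' / (τ.b * τ.d) = k / (τ.b * τ.d) ∧ k' % ρ.d = k % ρ.d := by
    ext k'
    rw [mem_contribClass, Finset.mem_filter, Finset.mem_range, hc.cols_eq_rows]
    refine and_congr_right fun hk' => ⟨fun h => ?_, fun h => hc.contribN_congr hk' hkτ h.1 h.2⟩
    obtain ⟨-, hδ', hα'⟩ := hc.params_of_contribN_ne_zero (h ▸ hU : contribN _ _ k' i j ≠ 0)
    exact ⟨hα'.trans hα.symm, hδ'.trans hδ.symm⟩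
  rw [hcls, Pattern.rows_eq, card_filter_div_mod hc.d_dvd_b_mul_d
    (Nat.div_lt_of_lt_mul (by rw [Pattern.rows_eq, Nat.mul_comm] at hkτ; exact hkτ))
    (Nat.mod_lt _ hc.d_pos), hc.b_mul_d, Nat.mul_div_cancel_left _ hc.d_pos]

theorem spatN_mul_ne_zero_iff (hc : ρ.Chainable τ) :
    SpatN (ρ * τ) i j ≠ 0 ↔ ∃ k, SpatN ρ i k ≠ 0 ∧ SpatN τ k j ≠ 0 := by
  rw [spatN_ne_zero_iff, hc.mul_rows, hc.mul_cols, hc.mul_b_mul_d, hc.mul_c_mul_d,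
    ← Nat.div_div_eq_div_mul j]
  show (_ ∧ _ ∧ _ ∧ i % τ.d = j % τ.d) ↔ _
  constructor
  · rintro ⟨hi, hj, hdiv, hmod⟩
    obtain ⟨hkdiv, hkmod⟩ := add_mul_div_eq_and_mod_eq (α := j / (τ.c * τ.d))
      (Nat.mod_lt i hc.d_pos) hc.d_dvd_b_mul_d hc.b_mul_d_pos
    have hk : i % ρ.d + j / (τ.c * τ.d) * (τ.b * τ.d) < τ.rows := by
      rw [Pattern.rows_eq, ← Nat.div_lt_iff_lt_mul hc.b_mul_d_pos, hkdiv]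
      exact Nat.div_lt_of_lt_mul (by rw [Pattern.cols, Nat.mul_assoc, Nat.mul_comm] at hj; exact hj)
    refine ⟨_, (hc.spatN_left_ne_zero_iff hk).mpr ⟨hi, by rw [hkdiv]; exact hdiv, hkmod.symm⟩,
      hc.spatN_right_ne_zero_iff.mpr ⟨hk, hj, hkdiv.symm, ?_⟩⟩
    rw [hkmod, Nat.mod_mod_of_dvd _ hc.dvd_d, hmod]
  · rintro ⟨k, hL, hR⟩
    obtain ⟨hk, hj, hjk, hjmod⟩ := hc.spatN_right_ne_zero_iff.mp hR
    obtain ⟨hi, hik, himod⟩ := (hc.spatN_left_ne_zero_iff hk).mp hL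
    refine ⟨hi, hj, by rw [hik, hjk], ?_⟩
    rw [← Nat.mod_mod_of_dvd i hc.dvd_d, himod, hjmod]

end Pattern.Chainable

section Factors

variable {ρ σ τ τ' : Pattern} {A Z f g : ℕ → ℕ → ℂ}

theorem IsFactorN.suppIn {π : Pattern} {X : ℕ → ℕ → ℂ} (hX : IsFactorN π X) :
    SuppIn π.rows π.cols X := fun i j hij =>
  have ⟨hi, hj, _⟩ := spatN_ne_zero_iff.mp fun h => hij (hX i j h)
  ⟨hi, hj⟩

theorem Pattern.Chainable.isFactorN_nmul (hc : ρ.Chainable τ) (hf : IsFactorN ρ f)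
    (hg : IsFactorN τ g) : IsFactorN (ρ * τ) (nmul f g) := fun i j h =>
  nmul_eq_zero_of_contribN_eq_zero hf hg fun k => by
    by_contra hk
    exact hc.spatN_mul_ne_zero_iff.mpr ⟨k, contribN_ne_zero_iff.mp hk⟩ h

theorem mem_bset_pairArch :
    A ∈ Bset (pairArch ρ τ) 2 ↔ ∃ f g, IsFactorN ρ f ∧ IsFactorN τ g ∧ A = nmul f g := by
  constructor
  · rintro ⟨X, hX, rfl⟩
    exact ⟨X 0, X 1, hX 0 (by omega), hX 1 (by omega), rfl⟩
  · rintro ⟨f, g, hf, hg, rfl⟩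
    refine ⟨fun ℓ => if ℓ = 0 then f else g, fun ℓ hℓ => ?_, rfl⟩
    interval_cases ℓ
    · exact hf
    · exact hg

theorem Pattern.Chainable.mem_bset_pairArch_iff (hρ : ρ.Pos) (hτ : τ.Pos) (hc : ρ.Chainable τ) :
    A ∈ Bset (pairArch ρ τ) 2 ↔ IsFactorN (ρ * τ) A ∧
      ∀ P ∈ classesN (SpatN ρ) (SpatN τ) ρ.cols,
        rankOn A (rowSuppN (SpatN ρ) (SpatN τ) ρ.rows P) (colSuppN (SpatN ρ) (SpatN τ) τ.cols P) ≤
          ρ.rk τ := by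
  refine mem_bset_pairArch.trans ((hc.nonOverlapping.exists_nmul_eq_iff A).trans (and_congr ?_ ?_))
  · refine forall₂_congr fun i j => imp_congr_left ?_
    rw [← not_iff_not, ← ne_eq, hc.spatN_mul_ne_zero_iff]
    simp only [not_forall, ← ne_eq, contribN_ne_zero_iff]
  · refine forall₂_congr fun P hP => ?_
    obtain ⟨k, hk, rfl⟩ := mem_classesN.mp hP
    rw [hc.card_contribClass hρ hτ hk]

theorem Pattern.Chainable.exists_mask_factorization (hc : ρ.Chainable τ)
    (hA : A ∈ Bset (pairArch ρ τ) 2) :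
    ∃ Z g, (∀ j k, Z j k ≠ 0 → SpatN τ k j ≠ 0) ∧ IsFactorN τ g ∧
      A = nmul (mask (SpatN ρ) (nmul A Z)) g :=
  have ⟨hA, hrank⟩ := (hc.nonOverlapping.exists_nmul_eq_iff A).mp (mem_bset_pairArch.mp hA)
  hc.nonOverlapping.exists_nmul_mask_eq hA hrank

theorem mask_mem_bset_pairArch (hσ : σ.Pos) (hτ' : τ'.Pos) (hτ : τ.Pos) (h₁ : σ.Chainable τ')
    (h₂ : τ'.Chainable τ) (hA : A ∈ Bset (pairArch σ (τ' * τ)) 2)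
    (hZ : ∀ j k, Z j k ≠ 0 → SpatN τ k j ≠ 0) :
    mask (SpatN (σ * τ')) (nmul A Z) ∈ Bset (pairArch σ τ') 2 := by
  have h₃ : σ.Chainable (τ' * τ) := h₁.mul_right h₂
  have hrankA := ((h₃.mem_bset_pairArch_iff hσ (hτ'.mul hτ h₂)).mp hA).2
  refine (h₁.mem_bset_pairArch_iff hσ hτ').mpr ⟨mask_supported _ _, fun P hP => ?_⟩
  obtain ⟨p, hp, rfl⟩ := mem_classesN.mp hP
  have hcontribA : ∀ {i k j}, SpatN σ i p ≠ 0 → SpatN τ' p k ≠ 0 → SpatN τ k j ≠ 0 →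
      contribN (SpatN σ) (SpatN (τ' * τ)) p i j ≠ 0 := fun hi hk hj =>
    contribN_ne_zero_iff.mpr ⟨hi, h₂.spatN_mul_ne_zero_iff.mpr ⟨_, hk, hj⟩⟩
  have hrows : rowSuppN (SpatN σ) (SpatN τ') σ.rows (contribClass (SpatN σ) (SpatN τ') σ.cols p) ⊆
      rowSuppN (SpatN σ) (SpatN (τ' * τ)) σ.rows
        (contribClass (SpatN σ) (SpatN (τ' * τ)) σ.cols p) := by
    intro i hi
    obtain ⟨hi, k, hk⟩ := (mem_rowSuppN_contribClass hp).mp hi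
    obtain ⟨hσi, hτ'k⟩ := contribN_ne_zero_iff.mp hk
    obtain ⟨j, hj⟩ := exists_spatN_ne_zero_right hτ
      (h₂.cols_eq_rows ▸ (spatN_ne_zero_iff.mp hτ'k).2.1)
    exact (mem_rowSuppN_contribClass hp).mpr ⟨hi, j, hcontribA hσi hτ'k hj⟩
  refine (rankOn_le_of_eq_sum (Z := Z) fun i hi k hk => ?_).trans
    ((rankOn_mono_left hrows).trans (hrankA _ (mem_classesN.mpr ⟨p, hp, rfl⟩)))
  obtain ⟨hσi, hτ'k⟩ := contribN_ne_zero_iff.mp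
    ((h₁.nonOverlapping.contribN_ne_zero_iff_mem hp).mpr ⟨hi, hk⟩)
  rw [mask, if_neg (h₁.spatN_mul_ne_zero_iff.mpr ⟨p, hσi, hτ'k⟩)]
  refine nmul_eq_sum fun j hj => ?_
  by_contra hne
  exact hj ((h₃.nonOverlapping.contribN_ne_zero_iff_mem hp).mp
    (hcontribA hσi hτ'k (hZ j k (right_ne_zero_of_mul hne)))).2

end Factors

/-! ### Chainable architectures -/

structure ChainableArch (π : ℕ → Pattern) (L : ℕ) : Prop where
  pos : ∀ ℓ < L, (π ℓ).Pos
  chainable : ∀ ℓ, ℓ + 1 < L → (π ℓ).Chainable (π (ℓ + 1))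

theorem pprod_a (π : ℕ → Pattern) (q : ℕ) : ∀ k, (pprod π q k).a = (π q).a
  | 0 => rfl
  | k + 1 => pprod_a π q k

namespace ChainableArch

variable {π : ℕ → Pattern} {L : ℕ}

theorem mono {L' : ℕ} (h : ChainableArch π L) (hL : L' ≤ L) : ChainableArch π L' :=
  ⟨fun ℓ hℓ => h.pos ℓ (by omega), fun ℓ hℓ => h.chainable ℓ (by omega)⟩

theorem pprod_chainable_succ (h : ChainableArch π L) {q : ℕ} :
    ∀ {k}, q + k + 1 < L → (pprod π q k).Chainable (π (q + k + 1))
  | 0, hk => h.chainable q hk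
  | k + 1, hk => (h.pprod_chainable_succ (by omega)).mul_left (h.chainable _ hk)

theorem pprod_pos (h : ChainableArch π L) {q : ℕ} : ∀ {k}, q + k < L → (pprod π q k).Pos
  | 0, hk => h.pos q hk
  | k + 1, hk =>
    (h.pprod_pos (by omega)).mul (h.pos _ hk) (h.pprod_chainable_succ (by omega))

theorem pprod_chainable (h : ChainableArch π L) {q k : ℕ} :
    ∀ {k'}, q + k + 1 + k' < L → (pprod π q k).Chainable (pprod π (q + k + 1) k')
  | 0, hk => h.pprod_chainable_succ hk
  | k' + 1, hk =>
    (h.pprod_chainable (by omega)).mul_right (h.pprod_chainable_succ (q := q + k + 1) hk)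

theorem pprod_mul (h : ChainableArch π L) {q k : ℕ} :
    ∀ {k'}, q + k + 1 + k' < L → pprod π q k * pprod π (q + k + 1) k' = pprod π q (k + k' + 1)
  | 0, _ => rfl
  | k' + 1, hk => by
    show pprod π q k * (pprod π (q + k + 1) k' * π (q + k + 1 + k' + 1)) = _
    rw [← Pattern.mul_assoc_of_chainable (h.pprod_chainable (by omega))
      (h.pprod_chainable_succ (q := q + k + 1) hk), h.pprod_mul (by omega)]
    show _ = pprod π q (k + k' + 1) * π (q + (k + k' + 1) + 1)
    congr 2
    omega

theorem pprod_rk (h : ChainableArch π L) {q k k' : ℕ} (hk : q + k + 1 + k' < L) :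
    (pprod π q k).rk (pprod π (q + k + 1) k') = (π (q + k)).rk (π (q + k + 1)) := by
  have e : (pprod π q k).rk (pprod π (q + k + 1) k') = (pprod π q k).rk (π (q + k + 1)) := by
    simp only [Pattern.rk, pprod_a]
  rw [e]
  cases k with
  | zero => rfl
  | succ k => exact Pattern.rk_mul_left (h.pprod_chainable_succ (k := k) (by omega))

end ChainableArch

section ProductOfFactors

variable {X X' : ℕ → ℕ → ℕ → ℂ}

theorem nprod_congr : ∀ {k}, (∀ ℓ ≤ k, X ℓ = X' ℓ) → nprod X k = nprod X' k
  | 0, h => h 0 le_rfl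
  | k + 1, h => by
    show nmul (nprod X k) (X (k + 1)) = nmul (nprod X' k) (X' (k + 1))
    rw [nprod_congr fun ℓ hℓ => h ℓ (by omega), h (k + 1) le_rfl]

theorem nprod_suppIn {N : ℕ} : ∀ {k}, (∀ ℓ ≤ k, SuppIn N N (X ℓ)) → SuppIn N N (nprod X k)
  | 0, h => h 0 le_rfl
  | _ + 1, h => (nprod_suppIn fun ℓ hℓ => h ℓ (by omega)).nmul (h _ le_rfl)

theorem nprod_add {N s : ℕ} :
    ∀ {t}, (∀ ℓ ≤ s + 1 + t, SuppIn N N (X ℓ)) →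
      nprod X (s + 1 + t) = nmul (nprod X s) (nprod (fun ℓ => X (s + 1 + ℓ)) t)
  | 0, _ => rfl
  | t + 1, h => by
    show nmul (nprod X (s + 1 + t)) (X (s + 1 + t + 1)) = _
    rw [nprod_add fun ℓ hℓ => h ℓ (by omega),
      nmul_assoc (nprod_suppIn fun ℓ hℓ => h ℓ (by omega))
        (nprod_suppIn (X := fun ℓ => X (s + 1 + ℓ)) fun ℓ hℓ => h _ (by omega))]
    rfl

end ProductOfFactors

theorem bset_congr {π π' : ℕ → Pattern} {L : ℕ} (h : ∀ ℓ < L, π ℓ = π' ℓ) :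
    Bset π L = Bset π' L := by
  ext A
  refine exists_congr fun X => and_congr_left fun _ => forall₂_congr fun ℓ hℓ => ?_
  rw [h ℓ hℓ]

theorem nmul_mem_bset_succ {π : ℕ → Pattern} {L : ℕ} {B g : ℕ → ℕ → ℂ} (hL : 1 ≤ L)
    (hB : B ∈ Bset π L) (hg : IsFactorN (π L) g) : nmul B g ∈ Bset π (L + 1) := by
  obtain ⟨X, hX, rfl⟩ := hB
  refine ⟨Function.update X L g, fun ℓ hℓ => ?_, ?_⟩
  · rcases (Nat.lt_succ_iff.mp hℓ).lt_or_eq with h | rfl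
    · rw [Function.update_of_ne h.ne]
      exact hX ℓ h
    · rw [Function.update_self]
      exact hg
  · obtain ⟨L, rfl⟩ : ∃ L', L = L' + 1 := ⟨L - 1, by omega⟩
    show nmul (nprod X L) g = nmul (nprod (Function.update X (L + 1) g) L) _
    rw [Function.update_self, nprod_congr (X := Function.update X (L + 1) g) (X' := X)
      fun ℓ hℓ => Function.update_of_ne (by omega) _ _]

theorem exists_suppIn_of_isFactorN {π : ℕ → Pattern} {L : ℕ} {X : ℕ → ℕ → ℕ → ℂ}
    (hX : ∀ ℓ < L, IsFactorN (π ℓ) (X ℓ)) : ∃ N, ∀ ℓ < L, SuppIn N N (X ℓ) := by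
  refine ⟨∑ ℓ ∈ Finset.range L, ((π ℓ).rows + (π ℓ).cols), fun ℓ hℓ i j hij => ?_⟩
  have hle : (π ℓ).rows + (π ℓ).cols ≤ ∑ ℓ ∈ Finset.range L, ((π ℓ).rows + (π ℓ).cols) :=
    Finset.single_le_sum (f := fun ℓ => (π ℓ).rows + (π ℓ).cols) (fun _ _ => Nat.zero_le _)
      (Finset.mem_range.mpr hℓ)
  have := (hX ℓ hℓ).suppIn i j hij
  constructor <;> omega

namespace ChainableArch

variable {π : ℕ → Pattern} {L s k : ℕ}

theorem split_chainable (h : ChainableArch π L) (hs : 1 ≤ s) (hk : s + k < L) :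
    (pprod π 0 (s - 1)).Chainable (pprod π s k) := by
  obtain ⟨u, rfl⟩ : ∃ u, s = u + 1 := ⟨s - 1, by omega⟩
  simpa using h.pprod_chainable (q := 0) (k := u) (k' := k) (by omega)

theorem split_mul (h : ChainableArch π L) (hs : 1 ≤ s) (hk : s + k < L) :
    pprod π 0 (s - 1) * pprod π s k = pprod π 0 (s + k) := by
  obtain ⟨u, rfl⟩ : ∃ u, s = u + 1 := ⟨s - 1, by omega⟩
  simpa [Nat.add_right_comm u 1 k] using h.pprod_mul (q := 0) (k := u) (k' := k) (by omega)

theorem split_rk (h : ChainableArch π L) (hs : 1 ≤ s) (hk : s + k < L) :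
    (pprod π 0 (s - 1)).rk (pprod π s k) = (π (s - 1)).rk (π s) := by
  obtain ⟨u, rfl⟩ : ∃ u, s = u + 1 := ⟨s - 1, by omega⟩
  simpa using h.pprod_rk (q := 0) (k := u) (k' := k) (by omega)

theorem isFactorN_nprod (h : ChainableArch π L) {q : ℕ} {X : ℕ → ℕ → ℕ → ℂ} :
    ∀ {k}, q + k < L → (∀ ℓ ≤ k, IsFactorN (π (q + ℓ)) (X ℓ)) →
      IsFactorN (pprod π q k) (nprod X k)
  | 0, _, hX => hX 0 le_rfl
  | _ + 1, hk, hX => (h.pprod_chainable_succ (by omega)).isFactorN_nmul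
    (h.isFactorN_nprod (by omega) fun ℓ hℓ => hX ℓ (by omega)) (hX _ le_rfl)

theorem mem_bset_pairArch_of_mem_bset (h : ChainableArch π L) {A : ℕ → ℕ → ℂ}
    (hA : A ∈ Bset π L) (hs : 1 ≤ s) (hsL : s ≤ L - 1) :
    A ∈ Bset (pairArch (pprod π 0 (s - 1)) (pprod π s (L - 1 - s))) 2 := by
  obtain ⟨X, hX, rfl⟩ := hA
  obtain ⟨N, hN⟩ := exists_suppIn_of_isFactorN hX
  obtain ⟨u, rfl⟩ : ∃ u, s = u + 1 := ⟨s - 1, by omega⟩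
  obtain ⟨t, ht⟩ : ∃ t, L - 1 = u + 1 + t := ⟨L - 1 - (u + 1), by omega⟩
  rw [ht, nprod_add fun ℓ hℓ => hN ℓ (by omega), Nat.add_sub_cancel_left, Nat.add_sub_cancel]
  exact mem_bset_pairArch.mpr ⟨_, _, h.isFactorN_nprod (q := 0) (by omega)
    (fun ℓ hℓ => by simpa using hX ℓ (by omega)),
    h.isFactorN_nprod (by omega) fun ℓ hℓ => hX _ (by omega), rfl⟩

theorem mem_bset_of_forall_mem_bset_pairArch (hL : 2 ≤ L) (h : ChainableArch π L)
    {A : ℕ → ℕ → ℂ}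
    (hA : ∀ s, 1 ≤ s → s ≤ L - 1 →
      A ∈ Bset (pairArch (pprod π 0 (s - 1)) (pprod π s (L - 1 - s))) 2) :
    A ∈ Bset π L := by
  induction L, hL using Nat.le_induction generalizing A with
  | base =>
    rw [bset_congr fun ℓ hℓ => show π ℓ = pairArch (π 0) (π 1) ℓ by interval_cases ℓ <;> rfl]
    exact hA 1 le_rfl le_rfl
  | succ L hL ih =>
    have hlast : (pprod π 0 (L - 1)).Chainable (π L) := by
      simpa [show L - 1 + 1 = L by omega] using
        h.pprod_chainable_succ (q := 0) (k := L - 1) (by omega)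
    have hAL := hA L (by omega) (by omega)
    rw [show L + 1 - 1 - L = 0 by omega] at hAL
    obtain ⟨Z, g, hZ, hg, hAeq⟩ := hlast.exists_mask_factorization hAL
    rw [hAeq]
    refine nmul_mem_bset_succ (by omega) (ih (h.mono (by omega)) fun s hs hsL => ?_) hg
    have hsplit := h.split_mul (k := L - 1 - s) hs (by omega)
    rw [show s + (L - 1 - s) = L - 1 by omega] at hsplit
    rw [← hsplit]
    have hright : (pprod π s (L - 1 - s)).Chainable (π L) := by
      simpa [show s + (L - 1 - s) + 1 = L by omega] using
        h.pprod_chainable_succ (q := s) (k := L - 1 - s) (by omega)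
    refine mask_mem_bset_pairArch (h.pprod_pos (by omega)) (h.pprod_pos (by omega))
      (h.pos L (by omega)) (h.split_chainable hs (by omega)) hright ?_ hZ
    have hAs := hA s hs (by omega)
    have hτA : pprod π s (L + 1 - 1 - s) = pprod π s (L - 1 - s) * π L := by
      rw [show L + 1 - 1 - s = L - 1 - s + 1 by omega]
      show _ * π (s + (L - 1 - s) + 1) = _
      rw [show s + (L - 1 - s) + 1 = L by omega]
    rwa [hτA] at hAs

theorem mem_bset_split_iff (h : ChainableArch π L) (hs : 1 ≤ s) (hsL : s ≤ L - 1)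
    (A : ℕ → ℕ → ℂ) :
    A ∈ Bset (pairArch (pprod π 0 (s - 1)) (pprod π s (L - 1 - s))) 2 ↔
      IsFactorN (pprod π 0 (L - 1)) A ∧
        ∀ P ∈ classesN (SpatN (pprod π 0 (s - 1))) (SpatN (pprod π s (L - 1 - s)))
            (pprod π 0 (s - 1)).cols,
          rankOn A
              (rowSuppN (SpatN (pprod π 0 (s - 1))) (SpatN (pprod π s (L - 1 - s)))
                (pprod π 0 (s - 1)).rows P)
              (colSuppN (SpatN (pprod π 0 (s - 1))) (SpatN (pprod π s (L - 1 - s)))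
                (pprod π s (L - 1 - s)).cols P) ≤
            (π (s - 1)).rk (π s) := by
  have hk : s + (L - 1 - s) < L := by omega
  rw [(h.split_chainable hs hk).mem_bset_pairArch_iff (h.pprod_pos (by omega))
    (h.pprod_pos hk), h.split_mul hs hk, h.split_rk hs hk, show s + (L - 1 - s) = L - 1 by omega]

end ChainableArch

/-- **Corollary (complementary low-rank characterization).** For a chainable architecture of
depth `L ≥ 2`, `B^β = ⋂_{s=1}^{L-1} B^{β_s}`; equivalently, `A ∈ B^β` iff the support of `A`
is contained in that of `S_{π 0 * ⋯ * π (L-1)}` and all blocks `A[R_P, C_P]` associated with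
the split at `s` have rank at most `r(π (s-1), π s)`. -/
theorem butterfly_characterization (L : ℕ) (hL : 2 ≤ L) (π : ℕ → Pattern)
    (hPos : ∀ ℓ < L, (π ℓ).Pos)
    (hch : ∀ ℓ, ℓ + 1 < L → Pattern.Chainable (π ℓ) (π (ℓ + 1)))
    (A : ℕ → ℕ → ℂ) :
    (A ∈ Bset π L ↔
      ∀ s, 1 ≤ s → s ≤ L - 1 →
        A ∈ Bset (pairArch (pprod π 0 (s - 1)) (pprod π s (L - 1 - s))) 2) ∧
    (A ∈ Bset π L ↔
      IsFactorN (pprod π 0 (L - 1)) A ∧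
      ∀ s, 1 ≤ s → s ≤ L - 1 →
        ∀ P ∈ classesN (SpatN (pprod π 0 (s - 1))) (SpatN (pprod π s (L - 1 - s)))
            (pprod π 0 (s - 1)).cols,
          rankOn A
              (rowSuppN (SpatN (pprod π 0 (s - 1))) (SpatN (pprod π s (L - 1 - s)))
                (pprod π 0 (s - 1)).rows P)
              (colSuppN (SpatN (pprod π 0 (s - 1))) (SpatN (pprod π s (L - 1 - s)))
                (pprod π s (L - 1 - s)).cols P) ≤
            Pattern.rk (π (s - 1)) (π s)) := by
  have hπ : ChainableArch π L := ⟨hPos, hch⟩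
  have hsplit : A ∈ Bset π L ↔ ∀ s, 1 ≤ s → s ≤ L - 1 →
      A ∈ Bset (pairArch (pprod π 0 (s - 1)) (pprod π s (L - 1 - s))) 2 :=
    ⟨fun hA _ hs hsL => hπ.mem_bset_pairArch_of_mem_bset hA hs hsL,
      hπ.mem_bset_of_forall_mem_bset_pairArch hL⟩
  refine ⟨hsplit, hsplit.trans ⟨fun hA => ⟨?_, fun s hs hsL => ?_⟩, fun ⟨hfac, hrank⟩ s hs hsL =>
    (hπ.mem_bset_split_iff hs hsL A).mpr ⟨hfac, hrank s hs hsL⟩⟩⟩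
  · exact ((hπ.mem_bset_split_iff le_rfl (by omega) A).mp (hA 1 le_rfl (by omega))).1
  · exact ((hπ.mem_bset_split_iff hs hsL A).mp (hA s hs hsL)).2
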